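/- For a firm f with strongly monotone responsive preferences and capacity c_f > p_f, under the worker-proposing deferred acceptance algorithm, reporting any smaller capacity b < c_f results in a set of matched workers that f weakly disprefers: for b ≥ p_f the matched set is unchanged, and for b < p_f the matched set is strictly smaller and hence strictly worse. -/
import Mathlib


/-- A many-to-one matching instance: firms `F` with capacities, workers `W`,
strict preferences of workers over `Option F` (`none` = unmatched), strict
preferences of firms over individual workers (`Option W`, `none` = keeping a
seat empty) together with a responsive extension to sets of workers. -/
structure MTO (F W : Type) [DecidableEq W] where
  cap : F → ℕ
  /-- `wlt w a b` : worker `w` strictly prefers `a` to `b`. -/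
  wlt : W → Option F → Option F → Prop
  wlt_trans : ∀ w a b c, wlt w a b → wlt w b c → wlt w a c
  wlt_irrefl : ∀ w a, ¬ wlt w a a
  wlt_trichot : ∀ w a b, a = b ∨ wlt w a b ∨ wlt w b a
  /-- `flt1 f a b` : firm `f` strictly prefers (single) worker option `a` to `b`. -/
  flt1 : F → Option W → Option W → Prop
  flt1_trans : ∀ f a b c, flt1 f a b → flt1 f b c → flt1 f a c
  flt1_irrefl : ∀ f a, ¬ flt1 f a a
  flt1_trichot : ∀ f a b, a = b ∨ flt1 f a b ∨ flt1 f b a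
  /-- `flt f S T` : firm `f` strictly prefers the set `S` to the set `T`
  (responsive extension of `flt1`). -/
  flt : F → Finset W → Finset W → Prop
  flt_trans : ∀ f S T U, flt f S T → flt f T U → flt f S U
  flt_irrefl : ∀ f S, ¬ flt f S S
  resp_add : ∀ f (S : Finset W) (w : W), w ∉ S →
    (flt f (insert w S) S ↔ flt1 f (some w) none)
  resp_swap : ∀ f (S : Finset W) (w w' : W), w ∉ S → w' ∉ S → w ≠ w' →
    (flt f (insert w S) (insert w' S) ↔ flt1 f (some w) (some w'))

variable {F W : Type} [DecidableEq W] [DecidableEq F] [Fintype W]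

/-- The set of workers matched to firm `f` under the matching `μ`. -/
def matchedSet (μ : W → Option F) (f : F) : Finset W :=
  Finset.univ.filter (fun w => μ w = some f)

/-- `μ` respects all capacity constraints. -/
def MTO.isMatching (I : MTO F W) (μ : W → Option F) : Prop :=
  ∀ f, (matchedSet μ f).card ≤ I.cap f

/-- No agent is matched to an unacceptable partner. -/
def MTO.indivRational (I : MTO F W) (μ : W → Option F) : Prop :=
  (∀ w f, μ w = some f → ¬ I.wlt w none (some f)) ∧
  (∀ w f, μ w = some f → ¬ I.flt1 f none (some w))

/-- The worker-firm pair `(w, f)` blocks `μ`. -/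
def MTO.blocks (I : MTO F W) (μ : W → Option F) (w : W) (f : F) : Prop :=
  I.wlt w (some f) (μ w) ∧
  ∃ S ⊆ matchedSet μ f, (insert w S).card ≤ I.cap f ∧
    I.flt f (insert w S) (matchedSet μ f)

/-- Stability: a feasible, individually rational matching with no blocking pair. -/
def MTO.isStable (I : MTO F W) (μ : W → Option F) : Prop :=
  I.isMatching μ ∧ I.indivRational μ ∧ ∀ w f, ¬ I.blocks μ w f

/-- `μ` is the worker-optimal stable matching (output of WPDA). -/
def MTO.workerOptimal (I : MTO F W) (μ : W → Option F) : Prop :=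
  I.isStable μ ∧ ∀ μ', I.isStable μ' → ∀ w, μ' w = μ w ∨ I.wlt w (μ w) (μ' w)

/-- `μ` is the firm-optimal stable matching (output of FPDA). -/
def MTO.firmOptimal (I : MTO F W) (μ : W → Option F) : Prop :=
  I.isStable μ ∧ ∀ μ', I.isStable μ' → ∀ f,
    matchedSet μ' f = matchedSet μ f ∨ I.flt f (matchedSet μ f) (matchedSet μ' f)

/-- The instance obtained from `I` by setting the capacity of firm `f` to `b`. -/
def MTO.withCap (I : MTO F W) (f : F) (b : ℕ) : MTO F W :=
  { I with cap := Function.update I.cap f b }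

/-- The peak of firm `f`: the largest number of workers matched to `f` in any
stable matching for any choice of `f`'s capacity. -/
noncomputable def MTO.peak (I : MTO F W) (f : F) : ℕ :=
  sSup {n | ∃ b μ, (I.withCap f b).isStable μ ∧ (matchedSet μ f).card = n}

/-- `w` proposes to `f` at some point of WPDA, where `μ` is the worker-optimal
stable matching (i.e. the WPDA outcome): `w` finds `f` acceptable and `f` is
weakly preferred by `w` to its final WPDA match. -/
def MTO.proposesTo (I : MTO F W) (μ : W → Option F) (w : W) (f : F) : Prop :=
  I.wlt w (some f) none ∧ (μ w = some f ∨ I.wlt w (some f) (μ w))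

/-- All workers in `S` are acceptable to `f`. -/
def MTO.acceptableSet (I : MTO F W) (f : F) (S : Finset W) : Prop :=
  ∀ w ∈ S, ¬ I.flt1 f none (some w)

/-- Strongly monotone preferences: any larger acceptable set is strictly
preferred to any smaller acceptable set. -/
def MTO.stronglyMonotone (I : MTO F W) (f : F) : Prop :=
  ∀ S T : Finset W, I.acceptableSet f S → I.acceptableSet f T →
    T.card < S.card → I.flt f S T

/-! ### Auxiliary lemmas -/

namespace MTO

lemma flt1_asymm (I : MTO F W) {f : F} {a b : Option W} (h : I.flt1 f a b) :
    ¬ I.flt1 f b a :=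
  fun h' => I.flt1_irrefl f a (I.flt1_trans f a b a h h')

lemma flt1_total (I : MTO F W) {f : F} {a b : Option W} (hne : a ≠ b)
    (h : ¬ I.flt1 f a b) : I.flt1 f b a := by
  rcases I.flt1_trichot f a b with rfl | h1 | h1
  · exact absurd rfl hne
  · exact absurd h1 h
  · exact h1

lemma wlt_total (I : MTO F W) {w : W} {a b : Option F} (hne : a ≠ b)
    (h : ¬ I.wlt w a b) : I.wlt w b a := by
  rcases I.wlt_trichot w a b with rfl | h1 | h1
  · exact absurd rfl hne
  · exact absurd h1 h
  · exact h1

end MTO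

lemma mem_matchedSet {μ : W → Option F} {g : F} {w : W} :
    w ∈ matchedSet μ g ↔ μ w = some g := by
  simp [matchedSet]

namespace MTO

/-- If `w` strictly prefers `f` to its match, `f` finds `w` acceptable and `f`
has a free seat, then `(w, f)` blocks. -/
lemma mk_block_add (I : MTO F W) {μ : W → Option F} {w : W} {f : F}
    (h1 : I.wlt w (some f) (μ w)) (hacc : I.flt1 f (some w) none)
    (hroom : (matchedSet μ f).card < I.cap f) : I.blocks μ w f := by
  have hwT : w ∉ matchedSet μ f := by
    intro h
    rw [mem_matchedSet] at h
    rw [h] at h1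
    exact I.wlt_irrefl w (some f) h1
  refine ⟨h1, matchedSet μ f, Finset.Subset.refl _, ?_, ?_⟩
  · rw [Finset.card_insert_of_notMem hwT]
    omega
  · exact (I.resp_add f _ w hwT).2 hacc

/-- If `w` strictly prefers `f` to its match and `f` strictly prefers `w` to one
of its matched workers, then `(w, f)` blocks. -/
lemma mk_block_swap (I : MTO F W) {μ : W → Option F} {w u : W} {f : F}
    (h1 : I.wlt w (some f) (μ w)) (hu : u ∈ matchedSet μ f)
    (hpref : I.flt1 f (some w) (some u))
    (hfeas : (matchedSet μ f).card ≤ I.cap f) : I.blocks μ w f := by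
  have hwT : w ∉ matchedSet μ f := by
    intro h
    rw [mem_matchedSet] at h
    rw [h] at h1
    exact I.wlt_irrefl w (some f) h1
  have hne : w ≠ u := by rintro rfl; exact hwT hu
  have hpos : 0 < (matchedSet μ f).card := Finset.card_pos.mpr ⟨u, hu⟩
  have hwE : w ∉ (matchedSet μ f).erase u := fun h => hwT (Finset.mem_of_mem_erase h)
  refine ⟨h1, (matchedSet μ f).erase u, Finset.erase_subset _ _, ?_, ?_⟩
  · rw [Finset.card_insert_of_notMem hwE, Finset.card_erase_of_mem hu]
    omega
  · have hs := I.resp_swap f ((matchedSet μ f).erase u) w u hwE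
      (Finset.notMem_erase u _) hne
    rw [Finset.insert_erase hu] at hs
    exact hs.2 hpref

/-- A set of acceptable workers is strictly preferred to any proper subset. -/
lemma pref_superset (I : MTO F W) (f : F) :
    ∀ (n : ℕ) (T S : Finset W), (T \ S).card = n → S ⊆ T →
      (∀ u ∈ T, I.flt1 f (some u) none) → S ≠ T → I.flt f T S := by
  intro n
  induction n with
  | zero =>
    intro T S hc hsub hacc hne
    exfalso
    apply hne
    have : T \ S = ∅ := Finset.card_eq_zero.1 hc
    exact Finset.Subset.antisymm hsub (by
      intro x hx
      by_contra hxS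
      exact absurd (Finset.mem_sdiff.2 ⟨hx, hxS⟩) (by simp [this]))
  | succ n ih =>
    intro T S hc hsub hacc hne
    have hne' : (T \ S).Nonempty := by
      rw [← Finset.card_pos, hc]; omega
    obtain ⟨u, hu⟩ := hne'
    have huT : u ∈ T := (Finset.mem_sdiff.1 hu).1
    have huS : u ∉ S := (Finset.mem_sdiff.1 hu).2
    have hadd : I.flt f (insert u S) S := (I.resp_add f S u huS).2 (hacc u huT)
    by_cases hTS : insert u S = T
    · rw [← hTS]; exact hadd
    · have hsub' : insert u S ⊆ T := Finset.insert_subset huT hsub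
      have hcard : (T \ insert u S).card = n := by
        rw [Finset.sdiff_insert, Finset.card_erase_of_mem hu, hc]
        omega
      exact I.flt_trans f T (insert u S) S (ih T (insert u S) hcard hsub' hacc hTS) hadd

/-- A firm never prefers adding an unacceptable worker (possibly dropping some
others) to an acceptable set. -/
lemma no_add_block (I : MTO F W) (f : F) {T S : Finset W} {w : W}
    (hsub : S ⊆ T) (hwT : w ∉ T)
    (hacc : ∀ u ∈ T, I.flt1 f (some u) none)
    (hbad : I.flt1 f none (some w)) :
    ¬ I.flt f (insert w S) T := by
  intro hflt
  have hwS : w ∉ S := fun h => hwT (hsub h)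
  by_cases hST : S = T
  · subst hST
    exact I.flt1_asymm hbad ((I.resp_add f S w hwS).1 hflt)
  · have hTSne : (T \ S).Nonempty := by
      rw [Finset.sdiff_nonempty]
      intro h
      exact hST (Finset.Subset.antisymm hsub h)
    obtain ⟨u, hu⟩ := hTSne
    have huT : u ∈ T := (Finset.mem_sdiff.1 hu).1
    have huS : u ∉ S := (Finset.mem_sdiff.1 hu).2
    have hne : u ≠ w := fun h => hwT (h ▸ huT)
    have hswap : I.flt f (insert u S) (insert w S) :=
      (I.resp_swap f S u w huS hwS hne).2
        (I.flt1_trans f (some u) none (some w) (hacc u huT) hbad)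
    have hTS' : I.flt f T (insert w S) := by
      by_cases h2 : insert u S = T
      · rw [← h2]; exact hswap
      · exact I.flt_trans f T (insert u S) (insert w S)
          (I.pref_superset f ((T \ insert u S).card) T (insert u S) rfl
            (Finset.insert_subset huT hsub) hacc h2) hswap
    exact I.flt_irrefl f T (I.flt_trans f T (insert w S) T hTS' hflt)

/-- If `f` has a free seat in a stable matching, then any worker strictly
preferring `f` to its match must be unacceptable to `f`. -/
lemma unacceptable_of_room (I : MTO F W) {μ : W → Option F} {f : F}
    (hst : I.isStable μ) (hroom : (matchedSet μ f).card < I.cap f) {w : W}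
    (hw : I.wlt w (some f) (μ w)) : I.flt1 f none (some w) := by
  by_contra h
  have hacc : I.flt1 f (some w) none :=
    I.flt1_total (by simp) h
  exact hst.2.2 w f (I.mk_block_add hw hacc hroom)

lemma withCap_self (I : MTO F W) (f : F) : I.withCap f (I.cap f) = I := by
  cases I
  simp [MTO.withCap, Function.update_eq_self]

/-- A stable matching where `f` has a free seat remains stable when `f`'s
capacity is changed to any value at least `f`'s fill. -/
lemma stable_withCap_of_room (I : MTO F W) {μ : W → Option F} {f : F}
    (hst : I.isStable μ) (hroom : (matchedSet μ f).card < I.cap f) {m : ℕ}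
    (hm : (matchedSet μ f).card ≤ m) :
    (I.withCap f m).isStable μ := by
  obtain ⟨hfeas, hir, hnb⟩ := hst
  refine ⟨?_, hir, ?_⟩
  · intro g
    by_cases hgf : g = f
    · subst hgf
      simpa [MTO.withCap, Function.update_self] using hm
    · simpa [MTO.withCap, Function.update_of_ne hgf] using hfeas g
  · intro w g hbl
    obtain ⟨h1, S, hS, hcard, hflt⟩ := hbl
    by_cases hgf : g = f
    · subst hgf
      have h1' : I.wlt w (some g) (μ w) := h1
      have hbad : I.flt1 g none (some w) :=
        I.unacceptable_of_room ⟨hfeas, hir, hnb⟩ hroom h1'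
      have hwT : w ∉ matchedSet μ g := by
        intro h
        rw [mem_matchedSet] at h
        rw [h] at h1'
        exact I.wlt_irrefl w (some g) h1'
      have hacc : ∀ u ∈ matchedSet μ g, I.flt1 g (some u) none := fun u hu =>
        I.flt1_total (by simp) (hir.2 u g (mem_matchedSet.1 hu))
      exact I.no_add_block g hS hwT hacc hbad hflt
    · refine hnb w g ⟨h1, S, hS, ?_, hflt⟩
      simpa [MTO.withCap, Function.update_of_ne hgf] using hcard

/-- Rural-hospitals-style lemma: if a firm has a free seat in one stable
matching, no other stable matching gives it more workers. -/
lemma rh_under (J : MTO F W) {μ ν : W → Option F} (hμ : J.isStable μ)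
    (hν : J.isStable ν) (f0 : F)
    (hroom : (matchedSet μ f0).card < J.cap f0) :
    (matchedSet ν f0).card ≤ (matchedSet μ f0).card := by
  classical
  by_contra hlt
  push_neg at hlt
  obtain ⟨hμfeas, hμir, hμnb⟩ := hμ
  obtain ⟨hνfeas, hνir, hνnb⟩ := hν
  have accμ : ∀ w g, μ w = some g → J.flt1 g (some w) none := fun w g h =>
    J.flt1_total (by simp) (hμir.2 w g h)
  have accν : ∀ w g, ν w = some g → J.flt1 g (some w) none := fun w g h =>
    J.flt1_total (by simp) (hνir.2 w g h)
  set B : Finset W := Finset.univ.filter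
      (fun w => (μ w).isSome ∧ (ν w).isSome ∧ J.wlt w (μ w) (ν w)) with hB
  -- Fact F1 about elements of B
  have F1 : ∀ w ∈ B, ∀ g, μ w = some g →
      w ∈ matchedSet μ g ∧ w ∉ matchedSet ν g ∧
      (matchedSet ν g).card = J.cap g ∧
      ∀ u ∈ matchedSet ν g, J.flt1 g (some u) (some w) := by
    intro w hw g hg
    rw [hB, Finset.mem_filter] at hw
    obtain ⟨-, -, -, hwlt⟩ := hw
    rw [hg] at hwlt
    have hwνg : w ∉ matchedSet ν g := by
      intro h
      rw [mem_matchedSet] at h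
      rw [h] at hwlt
      exact J.wlt_irrefl w (some g) hwlt
    have hfull : (matchedSet ν g).card = J.cap g := by
      rcases lt_or_ge (matchedSet ν g).card (J.cap g) with h | h
      · exact absurd (J.mk_block_add hwlt (accμ w g hg) h) (hνnb w g)
      · exact le_antisymm (hνfeas g) h
    refine ⟨mem_matchedSet.2 hg, hwνg, hfull, ?_⟩
    intro u hu
    refine J.flt1_total ?_ ?_
    · intro h
      rw [Option.some_inj] at h
      exact hwνg (h ▸ hu)
    · intro hcon
      exact hνnb w g (J.mk_block_swap hwlt hu hcon (hνfeas g))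
  -- Fact F2: displaced workers are themselves in B
  have F2 : ∀ g w0, w0 ∈ B → μ w0 = some g →
      ∀ u, u ∈ matchedSet ν g → u ∉ matchedSet μ g → u ∈ B := by
    intro g w0 hw0 hg0 u huν huμ
    have hνu : ν u = some g := mem_matchedSet.1 huν
    have hpref : J.flt1 g (some u) (some w0) := (F1 w0 hw0 g hg0).2.2.2 u huν
    have hnw : ¬ J.wlt u (some g) (μ u) := by
      intro hwlt
      exact hμnb u g (J.mk_block_swap hwlt (F1 w0 hw0 g hg0).1 hpref (hμfeas g))
    have hne : (some g : Option F) ≠ μ u := by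
      intro h
      exact huμ (mem_matchedSet.2 h.symm)
    have hwlt' : J.wlt u (μ u) (some g) := J.wlt_total hne hnw
    have hμus : (μ u).isSome := by
      cases hμu : μ u with
      | none =>
        rw [hμu] at hwlt'
        exact absurd hwlt' (hνir.1 u g hνu)
      | some g' => rfl
    rw [hB, Finset.mem_filter]
    exact ⟨Finset.mem_univ u, hμus, by rw [hνu]; rfl, by rw [hνu]; exact hwlt'⟩
  -- The witness w1
  have hw1ex : (matchedSet ν f0 \ matchedSet μ f0).Nonempty := by
    rw [Finset.sdiff_nonempty]
    intro hsub
    exact absurd (Finset.card_le_card hsub) (not_le.2 hlt)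
  obtain ⟨w1, hw1⟩ := hw1ex
  have hw1ν : ν w1 = some f0 := mem_matchedSet.1 (Finset.mem_sdiff.1 hw1).1
  have hw1μ : w1 ∉ matchedSet μ f0 := (Finset.mem_sdiff.1 hw1).2
  have hw1B : w1 ∈ B := by
    have hnw : ¬ J.wlt w1 (some f0) (μ w1) := by
      intro hwlt
      exact hμnb w1 f0 (J.mk_block_add hwlt (accν w1 f0 hw1ν) hroom)
    have hne : (some f0 : Option F) ≠ μ w1 := by
      intro h
      exact hw1μ (mem_matchedSet.2 h.symm)
    have hwlt' : J.wlt w1 (μ w1) (some f0) := J.wlt_total hne hnw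
    have hμus : (μ w1).isSome := by
      cases hμu : μ w1 with
      | none =>
        rw [hμu] at hwlt'
        exact absurd hwlt' (hνir.1 w1 f0 hw1ν)
      | some g' => rfl
    rw [hB, Finset.mem_filter]
    exact ⟨Finset.mem_univ w1, hμus, by rw [hw1ν]; rfl, by rw [hw1ν]; exact hwlt'⟩
  -- Counting
  set G : Finset (Option F) := B.image μ with hG
  set No : Option F → Finset W :=
    fun o => (Finset.univ.filter (fun w => ν w = o)) \
      (Finset.univ.filter (fun w => μ w = o)) with hNo
  set Bo : Option F → Finset W := fun o => B.filter (fun w => μ w = o) with hBo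
  have hwit : ∀ o ∈ G, ∃ g w0, o = some g ∧ w0 ∈ B ∧ μ w0 = some g := by
    intro o ho
    obtain ⟨w0, hw0B, hw0⟩ := Finset.mem_image.1 ho
    have : (μ w0).isSome := by
      rw [hB, Finset.mem_filter] at hw0B
      exact hw0B.2.1
    obtain ⟨g, hg⟩ := Option.isSome_iff_exists.1 this
    exact ⟨g, w0, by rw [← hw0, hg], hw0B, hg⟩
  have hNomatched : ∀ (g : F), No (some g) = matchedSet ν g \ matchedSet μ g := by
    intro g; rfl
  have hBosub : ∀ (g : F), some g ∈ G → Bo (some g) ⊆ matchedSet μ g \ matchedSet ν g := by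
    intro g _ w hw
    rw [hBo, Finset.mem_filter] at hw
    obtain ⟨hwB, hwg⟩ := hw
    have h := F1 w hwB g hwg
    exact Finset.mem_sdiff.2 ⟨h.1, h.2.1⟩
  have hfib : B.card = ∑ o ∈ G, (Bo o).card :=
    Finset.card_eq_sum_card_fiberwise (fun x hx => Finset.mem_image_of_mem μ hx)
  have hcardle : ∀ o ∈ G, (Bo o).card ≤ (No o).card := by
    intro o ho
    obtain ⟨g, w0, rfl, hw0B, hw0⟩ := hwit o ho
    have hfull : (matchedSet ν g).card = J.cap g := (F1 w0 hw0B g hw0).2.2.1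
    have h1 : (matchedSet μ g).card ≤ (matchedSet ν g).card := by
      rw [hfull]; exact hμfeas g
    have e1 := Finset.card_sdiff_add_card_inter (matchedSet μ g) (matchedSet ν g)
    have e2 := Finset.card_sdiff_add_card_inter (matchedSet ν g) (matchedSet μ g)
    have e3 : (matchedSet μ g ∩ matchedSet ν g).card
        = (matchedSet ν g ∩ matchedSet μ g).card := by rw [Finset.inter_comm]
    have h2 : (Bo (some g)).card ≤ (matchedSet μ g \ matchedSet ν g).card :=
      Finset.card_le_card (hBosub g ho)
    rw [hNomatched g]
    omega
  have hNoB : ∀ o ∈ G, No o ⊆ B := by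
    intro o ho
    obtain ⟨g, w0, rfl, hw0B, hw0⟩ := hwit o ho
    rw [hNomatched g]
    intro u hu
    exact F2 g w0 hw0B hw0 u (Finset.mem_sdiff.1 hu).1 (Finset.mem_sdiff.1 hu).2
  have hNoν : ∀ o u, u ∈ No o → ν u = o := by
    intro o u hu
    rw [hNo] at hu
    exact (Finset.mem_filter.1 (Finset.mem_sdiff.1 hu).1).2
  have hdisj : ∀ o1 ∈ G, ∀ o2 ∈ G, o1 ≠ o2 → Disjoint (No o1) (No o2) := by
    intro o1 _ o2 _ hne
    rw [Finset.disjoint_left]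
    intro u hu1 hu2
    exact hne ((hNoν o1 u hu1).symm.trans (hNoν o2 u hu2))
  have hbuc : (G.biUnion No).card = ∑ o ∈ G, (No o).card := Finset.card_biUnion hdisj
  have hbusub : G.biUnion No ⊆ B := by
    intro u hu
    obtain ⟨o, ho, hu'⟩ := Finset.mem_biUnion.1 hu
    exact hNoB o ho hu'
  have hsum_eq : ∑ o ∈ G, (Bo o).card = ∑ o ∈ G, (No o).card := by
    have h1 : ∑ o ∈ G, (Bo o).card ≤ ∑ o ∈ G, (No o).card :=
      Finset.sum_le_sum hcardle
    have h2 : ∑ o ∈ G, (No o).card ≤ B.card := by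
      rw [← hbuc]
      exact Finset.card_le_card hbusub
    omega
  have hBeq : G.biUnion No = B := by
    apply Finset.eq_of_subset_of_card_le hbusub
    rw [hbuc, ← hsum_eq, ← hfib]
  -- f0 is "active"
  have hw1in : w1 ∈ G.biUnion No := by rw [hBeq]; exact hw1B
  obtain ⟨o0, ho0G, hw1No⟩ := Finset.mem_biUnion.1 hw1in
  have ho0 : o0 = some f0 := by
    rw [← hNoν o0 w1 hw1No, hw1ν]
  subst ho0
  -- termwise equality at some f0
  have hterm : (Bo (some f0)).card = (No (some f0)).card :=
    (Finset.sum_eq_sum_iff_of_le hcardle).1 hsum_eq (some f0) ho0G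
  obtain ⟨g', w0, hg', hw0B, hw0⟩ := hwit (some f0) ho0G
  rw [Option.some_inj] at hg'
  subst hg'
  have hfull : (matchedSet ν f0).card = J.cap f0 := (F1 w0 hw0B f0 hw0).2.2.1
  have e1 := Finset.card_sdiff_add_card_inter (matchedSet μ f0) (matchedSet ν f0)
  have e2 := Finset.card_sdiff_add_card_inter (matchedSet ν f0) (matchedSet μ f0)
  have e3 : (matchedSet μ f0 ∩ matchedSet ν f0).card
      = (matchedSet ν f0 ∩ matchedSet μ f0).card := by rw [Finset.inter_comm]
  have h2 : (Bo (some f0)).card ≤ (matchedSet μ f0 \ matchedSet ν f0).card :=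
    Finset.card_le_card (hBosub f0 ho0G)
  rw [hNomatched f0] at hterm
  omega

lemma peak_bddAbove (I : MTO F W) (f : F) :
    BddAbove {n | ∃ b μ, (I.withCap f b).isStable μ ∧ (matchedSet μ f).card = n} := by
  refine ⟨Fintype.card W, ?_⟩
  rintro n ⟨b, μ, -, rfl⟩
  exact le_trans (Finset.card_le_univ _) (le_of_eq Finset.card_univ)

end MTO

/-- For a firm with strongly monotone preferences and capacity above its peak,
under WPDA any reported smaller capacity `b < c_f` yields a weakly dispreferred
match: unchanged if `b ≥ p_f`, and strictly smaller hence strictly worse if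
`b < p_f`. -/
theorem strongly_monotone_delete_above_peak_wpda
    {F W : Type} [DecidableEq W] [DecidableEq F] [Fintype W]
    (I : MTO F W) (f : F)
    (hsm : I.stronglyMonotone f)
    (hpeak : I.peak f < I.cap f)
    (b : ℕ) (hb : b < I.cap f)
    (μ μb : W → Option F)
    (hμ : I.workerOptimal μ)
    (hμb : (I.withCap f b).workerOptimal μb) :
    (I.peak f ≤ b → matchedSet μb f = matchedSet μ f) ∧
    (b < I.peak f →
      (matchedSet μb f).card < (matchedSet μ f).card ∧
      I.flt f (matchedSet μ f) (matchedSet μb f)) := by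
  classical
  have hstμ : I.isStable μ := hμ.1
  have hmem : (matchedSet μ f).card ∈
      {n | ∃ b μ', (I.withCap f b).isStable μ' ∧ (matchedSet μ' f).card = n} :=
    ⟨I.cap f, μ, by rw [I.withCap_self f]; exact hstμ, rfl⟩
  have hTp : (matchedSet μ f).card ≤ I.peak f :=
    le_csSup (I.peak_bddAbove f) hmem
  have hTc : (matchedSet μ f).card < I.cap f := lt_of_le_of_lt hTp hpeak
  -- the stable matching at large capacity attains the peak
  have hpT : I.peak f ≤ (matchedSet μ f).card := by
    apply csSup_le ⟨(matchedSet μ f).card, hmem⟩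
    rintro n ⟨b', ν, hst, rfl⟩
    have hνb' : (matchedSet ν f).card ≤ b' := by
      have h := hst.1 f
      simpa [MTO.withCap, Function.update_self] using h
    by_cases hb' : b' ≤ (matchedSet μ f).card
    · omega
    · push_neg at hb'
      have hμ' : (I.withCap f b').isStable μ :=
        I.stable_withCap_of_room hstμ hTc (le_of_lt hb')
      have hroom' : (matchedSet μ f).card < (I.withCap f b').cap f := by
        simpa [MTO.withCap, Function.update_self] using hb'
      exact (I.withCap f b').rh_under hμ' hst f hroom'
  have hpeakT : I.peak f = (matchedSet μ f).card := le_antisymm hpT hTp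
  have hTbcap : (matchedSet μb f).card ≤ b := by
    have h := hμb.1.1 f
    simpa [MTO.withCap, Function.update_self] using h
  constructor
  · -- b at least the peak : the match is unchanged
    intro hpb
    rw [hpeakT] at hpb
    have hμJb : (I.withCap f b).isStable μ :=
      I.stable_withCap_of_room hstμ hTc hpb
    have hopt : ∀ w, μ w = μb w ∨ (I.withCap f b).wlt w (μb w) (μ w) :=
      hμb.2 μ hμJb
    have hμbI : I.isStable μb := by
      obtain ⟨hfeasb, hirb, hnbb⟩ := hμb.1
      refine ⟨?_, hirb, ?_⟩
      · intro g
        by_cases hgf : g = f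
        · subst hgf
          have h := hfeasb g
          simp only [MTO.withCap, Function.update_self] at h
          omega
        · have h := hfeasb g
          simpa [MTO.withCap, Function.update_of_ne hgf] using h
      · intro w g hbl
        obtain ⟨h1, S, hS, hcard, hflt⟩ := hbl
        by_cases hgf : g = f
        · subst hgf
          have h1b : I.wlt w (some g) (μb w) := h1
          have h1' : I.wlt w (some g) (μ w) := by
            rcases hopt w with he | hlt
            · rw [he]; exact h1b
            · exact I.wlt_trans w (some g) (μb w) (μ w) h1b hlt
          have hbad : I.flt1 g none (some w) :=
            I.unacceptable_of_room hstμ hTc h1'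
          have hwT : w ∉ matchedSet μb g := by
            intro h
            rw [mem_matchedSet] at h
            rw [h] at h1b
            exact I.wlt_irrefl w (some g) h1b
          have hacc : ∀ u ∈ matchedSet μb g, I.flt1 g (some u) none := fun u hu =>
            I.flt1_total (by simp) (hirb.2 u g (mem_matchedSet.1 hu))
          exact I.no_add_block g hS hwT hacc hbad hflt
        · refine hnbb w g ⟨h1, S, hS, ?_, hflt⟩
          simpa [MTO.withCap, Function.update_of_ne hgf] using hcard
    have heq : ∀ w, μb w = μ w := by
      intro w
      rcases hμ.2 μb hμbI w with he | hlt1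
      · exact he
      · rcases hopt w with he | hlt2
        · exact he.symm
        · exact absurd (I.wlt_trans w (μ w) (μb w) (μ w) hlt1 hlt2)
            (I.wlt_irrefl w (μ w))
    ext w
    simp [matchedSet, heq w]
  · -- b below the peak : strictly smaller and strictly worse
    intro hbp
    rw [hpeakT] at hbp
    have hcard : (matchedSet μb f).card < (matchedSet μ f).card := by omega
    refine ⟨hcard, hsm (matchedSet μ f) (matchedSet μb f) ?_ ?_ hcard⟩
    · intro u hu
      exact hstμ.2.1.2 u f (mem_matchedSet.1 hu)
    · intro u hu
      exact hμb.1.2.1.2 u f (mem_matchedSet.1 hu)
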